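/- arXiv:2502.19855 — 3 statements merged into one kernel-verified Lean document; each statement's English description precedes it below -/
import Mathlib

section
/- Let T be an A-bounded operator, suppose the range of A has dimension at least 3, and let q ∈ D. Then q·W_A(T) ⊆ W_{q,A}(T), i.e. for every x ∈ H with ‖x‖_A = 1 one has q⟨Tx,x⟩_A ∈ W_{q,A}(T). -/
noncomputable section

open Filter

variable {H : Type*} [NormedAddCommGroup H] [InnerProductSpace ℂ H] [CompleteSpace H]

/-- The paper's semi-inner product `⟨x, y⟩_A = ⟨A x, y⟩`, where the inner product of the
paper is linear in the *first* argument; in Mathlib's convention this is `⟪y, A x⟫_ℂ`. -/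
def sipA (A : H →L[ℂ] H) (x y : H) : ℂ := inner ℂ y (A x)

/-- The `A`-seminorm `‖x‖_A = ⟨A x, x⟩ ^ (1/2)`. -/
def semiNormA (A : H →L[ℂ] H) (x : H) : ℝ := Real.sqrt (sipA A x x).re

/-- The `A`-`q`-numerical range `W_{q,A}(T)`. -/
def WqA (A : H →L[ℂ] H) (q : ℂ) (T : H →L[ℂ] H) : Set ℂ :=
  {z | ∃ x y : H, semiNormA A x = 1 ∧ semiNormA A y = 1 ∧ sipA A x y = q ∧ z = sipA A (T x) y}

/-- The `A`-`q`-numerical radius `w_{q,A}(T)`. -/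
def wqA (A : H →L[ℂ] H) (q : ℂ) (T : H →L[ℂ] H) : ℝ := sSup ((fun z : ℂ => ‖z‖) '' WqA A q T)

/-- The `A`-operator seminorm `‖T‖_A = sup {‖T x‖_A : ‖x‖_A ≤ 1}`. -/
def opNormA (A T : H →L[ℂ] H) : ℝ :=
  sSup ((fun x => semiNormA A (T x)) '' {x : H | semiNormA A x ≤ 1})

/-- `T` is `A`-bounded: `‖T x‖_A ≤ c ‖x‖_A` for some `c > 0`. -/
def ABounded (A T : H →L[ℂ] H) : Prop := ∃ c > 0, ∀ x : H, semiNormA A (T x) ≤ c * semiNormA A x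

/-! Given `x` with `‖x‖_A = 1`, choose `u` with `‖u‖_A = 1` that is `A`-orthogonal to both `x`
and `T x`: if `A` vanished on `(span {A x, A (T x)})ᗮ`, its range would have dimension at most 2.
Then `y = conj q • x + √(1 - |q|²) • u` has `‖y‖_A = 1`, `⟨x, y⟩_A = q` and
`⟨T x, y⟩_A = q ⟨T x, x⟩_A`. -/

open ComplexConjugate

universe u

theorem Submodule.exists_mem_orthogonal_apply_ne_zero {𝕜 : Type*} {E F : Type u} [RCLike 𝕜]
    [NormedAddCommGroup E] [InnerProductSpace 𝕜 E] [AddCommGroup F] [Module 𝕜 F]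
    (f : E →ₗ[𝕜] F) (K : Submodule 𝕜 E) [K.HasOrthogonalProjection]
    (hK : Module.rank 𝕜 K < Module.rank 𝕜 (LinearMap.range f)) : ∃ u ∈ Kᗮ, f u ≠ 0 := by
  by_contra! hf
  have hKperp : Kᗮ.map f = ⊥ := by
    rw [Submodule.eq_bot_iff]
    rintro _ ⟨u, hu, rfl⟩
    exact hf u hu
  have hrange : LinearMap.range f = K.map f := by
    rw [LinearMap.range_eq_map, ← K.sup_orthogonal_of_hasOrthogonalProjection, Submodule.map_sup,
      hKperp, sup_bot_eq]
  rw [hrange] at hK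
  exact (rank_map_le f K).not_gt hK

theorem ContinuousLinearMap.IsPositive.re_inner_map_self_pos {A : H →L[ℂ] H}
    (hA : A.IsPositive) {u : H} (hu : A u ≠ 0) : 0 < (inner ℂ u (A u)).re := by
  -- `A = B† B`, so `⟪u, A u⟫ = ‖B u‖²`.
  obtain ⟨B, rfl⟩ :=
    CStarAlgebra.nonneg_iff_eq_star_mul_self.mp ((nonneg_iff_isPositive A).mpr hA)
  have hBu : B u ≠ 0 := fun h => hu (by simp [h])
  rw [show (star B * B) u = adjoint B (B u) from rfl, adjoint_inner_right]
  exact re_inner_self_pos (𝕜 := ℂ) |>.mpr hBu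

section SemiInnerProduct

variable {E : Type*} [NormedAddCommGroup E] [InnerProductSpace ℂ E] (A : E →L[ℂ] E)

theorem sipA_add_left (x y z : E) : sipA A (x + y) z = sipA A x z + sipA A y z := by
  simp [sipA]

theorem sipA_smul_left (c : ℂ) (x y : E) : sipA A (c • x) y = c * sipA A x y := by
  simp [sipA]

theorem sipA_add_right (x y z : E) : sipA A x (y + z) = sipA A x y + sipA A x z := by
  simp [sipA]

theorem sipA_smul_right (c : ℂ) (x y : E) : sipA A x (c • y) = conj c * sipA A x y := by
  simp [sipA, mul_comm]

theorem semiNormA_smul (c : ℂ) (x : E) : semiNormA A (c • x) = ‖c‖ * semiNormA A x := by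
  have h : sipA A (c • x) (c • x) = ((‖c‖ ^ 2 : ℝ) : ℂ) * sipA A x x := by
    rw [sipA_smul_left, sipA_smul_right, ← mul_assoc, Complex.mul_conj,
      Complex.normSq_eq_norm_sq]
  rw [semiNormA, semiNormA, h, Complex.re_ofReal_mul, Real.sqrt_mul (by positivity),
    Real.sqrt_sq (norm_nonneg c)]

variable {A}

theorem sipA_self_eq_re (hA : A.IsPositive) (x : E) : sipA A x x = (sipA A x x).re := by
  have him : (sipA A x x).im = 0 := (Complex.nonneg_iff.mp (hA.inner_nonneg_right x)).2.symm
  exact Complex.ext rfl (by simp [him])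

theorem conj_sipA (hA : A.IsPositive) (x y : E) : conj (sipA A x y) = sipA A y x := by
  rw [sipA, sipA, inner_conj_symm, hA.inner_left_eq_inner_right]

theorem semiNormA_eq_one_iff (hA : A.IsPositive) {x : E} :
    semiNormA A x = 1 ↔ sipA A x x = 1 := by
  rw [semiNormA, Real.sqrt_eq_one, sipA_self_eq_re hA x]
  exact_mod_cast Iff.rfl

theorem mul_sipA_mem_WqA (hA : A.IsPositive) (T : E →L[ℂ] E) {q : ℂ}
    (hq : ‖q‖ ≤ 1) {x u : E} (hx : semiNormA A x = 1) (hu : semiNormA A u = 1)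
    (hxu : sipA A x u = 0) (hTxu : sipA A (T x) u = 0) : q * sipA A (T x) x ∈ WqA A q T := by
  rw [semiNormA_eq_one_iff hA] at hx hu
  have hux : sipA A u x = 0 := by rw [← conj_sipA hA, hxu, map_zero]
  set b : ℝ := √(1 - ‖q‖ ^ 2)
  have hb : b ^ 2 = 1 - ‖q‖ ^ 2 := Real.sq_sqrt (by nlinarith [norm_nonneg q])
  have hy (z : E) : sipA A z (conj q • x + (b : ℂ) • u) = q * sipA A z x + b * sipA A z u := by
    rw [sipA_add_right, sipA_smul_right, sipA_smul_right, Complex.conj_conj, Complex.conj_ofReal]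
  refine ⟨x, conj q • x + (b : ℂ) • u, (semiNormA_eq_one_iff hA).mpr hx, ?_, ?_, ?_⟩
  · rw [semiNormA_eq_one_iff hA, sipA_add_left, sipA_smul_left, sipA_smul_left, hy, hy, hx, hu,
      hxu, hux]
    have hb' : (b : ℂ) ^ 2 = 1 - (‖q‖ : ℂ) ^ 2 := by exact_mod_cast hb
    linear_combination hb' + Complex.mul_conj' q
  · rw [hy, hx, hxu]; ring
  · rw [hy, hTxu]; ring

end SemiInnerProduct

theorem exists_semiNormA_eq_one_sipA_eq_zero {A : H →L[ℂ] H} (hA : A.IsPositive)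
    (hrank : 3 ≤ Module.rank ℂ (LinearMap.range A.toLinearMap)) (v w : H) :
    ∃ u, semiNormA A u = 1 ∧ sipA A v u = 0 ∧ sipA A w u = 0 := by
  set K := Submodule.span ℂ ({A v, A w} : Set H)
  have : FiniteDimensional ℂ K := FiniteDimensional.span_of_finite ℂ (Set.toFinite _)
  have hK : Module.rank ℂ K < Module.rank ℂ (LinearMap.range A.toLinearMap) :=
    calc Module.rank ℂ K ≤ 2 :=
          (rank_span_le _).trans (Cardinal.mk_insert_le.trans (by norm_num))
      _ < 3 := by norm_num
      _ ≤ _ := hrank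
  obtain ⟨u, hu, hAu⟩ := K.exists_mem_orthogonal_apply_ne_zero A.toLinearMap hK
  have hpos : 0 < semiNormA A u := Real.sqrt_pos.mpr (hA.re_inner_map_self_pos hAu)
  have horth (z : H) (hz : A z ∈ K) : sipA A z u = 0 := K.inner_left_of_mem_orthogonal hz hu
  refine ⟨(semiNormA A u : ℂ)⁻¹ • u, ?_, ?_, ?_⟩
  · rw [semiNormA_smul, norm_inv, Complex.norm_real, Real.norm_of_nonneg hpos.le,
      inv_mul_cancel₀ hpos.ne']
  · rw [sipA_smul_right, horth v (Submodule.subset_span (by simp)), mul_zero]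
  · rw [sipA_smul_right, horth w (Submodule.subset_span (by simp)), mul_zero]

theorem stmt_6_general (A : H →L[ℂ] H) (hA : A.IsPositive)
    (hrank : 3 ≤ Module.rank ℂ (LinearMap.range A.toLinearMap))
    (T : H →L[ℂ] H)
    (q : ℂ) (hq : ‖q‖ ≤ 1) :
    (fun z => q * z) '' {z : ℂ | ∃ x : H, semiNormA A x = 1 ∧ z = sipA A (T x) x}
      ⊆ WqA A q T := by
  rintro _ ⟨_, ⟨x, hx, rfl⟩, rfl⟩
  obtain ⟨u, hu, hxu, hTxu⟩ := exists_semiNormA_eq_one_sipA_eq_zero hA hrank x (T x)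
  exact mul_sipA_mem_WqA hA T hq hx hu hxu hTxu

theorem stmt_6 (A : H →L[ℂ] H) (hA : A.IsPositive)
    (hrank : 3 ≤ Module.rank ℂ (LinearMap.range A.toLinearMap))
    (T : H →L[ℂ] H) (hT : ABounded A T)
    (q : ℂ) (hq : ‖q‖ ≤ 1) :
    (fun z => q * z) '' {z : ℂ | ∃ x : H, semiNormA A x = 1 ∧ z = sipA A (T x) x}
      ⊆ WqA A q T :=
  stmt_6_general A hA hrank T q hq
end
end

section
/- Let T be an A-bounded operator and q ∈ D, and suppose the range of A has dimension at least 2. Then w_{q,A}(T) = sup{ |q|·|⟨Tx,x⟩_A| + √(1−|q|²)·|⟨Tx,z⟩_A| : x,z ∈ H, ‖x‖_A = ‖z‖_A = 1, ⟨x,z⟩_A = 0 }. -/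
noncomputable section

open Filter

variable {H : Type*} [NormedAddCommGroup H] [InnerProductSpace ℂ H] [CompleteSpace H]

/-!
Write `A = S * S` with `S = √A`. Then `⟨x, y⟩_A = ⟪S y, S x⟫` and `‖x‖_A = ‖S x‖`, so everything
happens among the vectors `S x` of a genuine inner product space. If `‖S y‖ = 1` and
`⟪S y, S x⟫ = q`, then `S y = q̄ • S x + √(1 - |q|²) • S z` for some unit vector `S z ⟂ S x`,
which bounds `|⟨T x, y⟩_A|` by `|q| |⟨T x, x⟩_A| + √(1 - |q|²) |⟨T x, z⟩_A|`. Conversely, for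
`S x ⟂ S z` unit vectors, `y = q̄ • x + ē • z` with `|e| = √(1 - |q|²)` and the phase of `e`
aligning the two terms attains this bound. The rank hypothesis supplies `z` when `|q| = 1`.
-/

open scoped InnerProductSpace ComplexConjugate

lemma Complex.exists_norm_eq_and_norm_add_mul_eq (α β : ℂ) {r : ℝ} (hr : 0 ≤ r) :
    ∃ e : ℂ, ‖e‖ = r ∧ ‖α + e * β‖ = ‖α‖ + r * ‖β‖ := by
  -- `e` rotates `β` onto the direction of `α`
  refine ⟨r * exp (↑(arg α - arg β) * I), ?_, ?_⟩
  · rw [norm_mul, norm_exp_ofReal_mul_I, norm_real, Real.norm_of_nonneg hr, mul_one]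
  · have hrot : exp (↑(arg α - arg β) * I) * exp (arg β * I) = exp (arg α * I) := by
      rw [← exp_add]; push_cast; ring_nf
    have hαβ : α + r * exp (↑(arg α - arg β) * I) * β = ↑(‖α‖ + r * ‖β‖) * exp (arg α * I) := by
      push_cast at hrot ⊢
      linear_combination -norm_mul_exp_arg_mul_I α
        - r * exp ((arg α - arg β) * I) * norm_mul_exp_arg_mul_I β + r * ‖β‖ * hrot
    rw [hαβ, norm_mul, norm_exp_ofReal_mul_I, norm_real, mul_one,
      Real.norm_of_nonneg (by positivity)]

section InnerProductSpace

variable {E : Type*} [NormedAddCommGroup E] [InnerProductSpace ℂ E]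

lemma Submodule.exists_mem_norm_eq_one_inner_eq_zero {K : Submodule ℂ E}
    (hK : 2 ≤ Module.rank ℂ K) {u : E} (hu : u ∈ K) :
    ∃ z ∈ K, ‖z‖ = 1 ∧ ⟪z, u⟫_ℂ = 0 := by
  have hne : (ℂ ∙ u)ᗮ ⊓ K ≠ ⊥ := by
    intro hbot
    have hKu : ℂ ∙ u = K := by
      simpa [hbot] using sup_orthogonal_inf_of_hasOrthogonalProjection
        ((Submodule.span_singleton_le_iff_mem u K).mpr hu)
    have : Module.rank ℂ K ≤ 1 := hKu ▸ (rank_span_le _).trans (by simp)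
    exact absurd (hK.trans this) (by norm_num)
  obtain ⟨w, ⟨hwu, hwK⟩, hw0⟩ := Submodule.exists_mem_ne_zero_of_ne_bot hne
  refine ⟨(‖w‖⁻¹ : ℂ) • w, K.smul_mem _ hwK, norm_smul_inv_norm hw0, ?_⟩
  rw [inner_smul_left, inner_eq_zero_symm.mp (mem_orthogonal_singleton_iff_inner_right.mp hwu),
    mul_zero]

lemma inner_sub_conj_smul_eq_zero {u v : E} {q : ℂ} (hu : ‖u‖ = 1) (hvu : ⟪v, u⟫_ℂ = q) :
    ⟪u, v - conj q • u⟫_ℂ = 0 := by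
  rw [inner_sub_right, inner_smul_right, ← hvu, inner_conj_symm, inner_self_eq_norm_sq_to_K, hu]
  simp

lemma norm_sub_conj_smul {u v : E} {q : ℂ} (hu : ‖u‖ = 1) (hv : ‖v‖ = 1) (hvu : ⟪v, u⟫_ℂ = q) :
    ‖v - conj q • u‖ = √(1 - ‖q‖ ^ 2) := by
  have hpyth := norm_add_sq_eq_norm_sq_add_norm_sq_of_inner_eq_zero (conj q • u) (v - conj q • u)
    (by rw [inner_smul_left, inner_sub_conj_smul_eq_zero hu hvu, mul_zero])
  rw [add_sub_cancel, hv, norm_smul, RCLike.norm_conj, hu] at hpyth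
  rw [← Real.sqrt_sq (norm_nonneg (v - conj q • u))]
  congr 1
  nlinarith

end InnerProductSpace

section LinearMap

variable {V E : Type*} [AddCommGroup V] [Module ℂ V] [NormedAddCommGroup E] [InnerProductSpace ℂ E]
  (S : V →ₗ[ℂ] E)

lemma LinearMap.exists_norm_inner_le_of_inner_eq {x y : V} {q : ℂ}
    (horth : ∃ z, ‖S z‖ = 1 ∧ ⟪S z, S x⟫_ℂ = 0) (hx : ‖S x‖ = 1) (hy : ‖S y‖ = 1)
    (hyx : ⟪S y, S x⟫_ℂ = q) (b : E) :
    ∃ z, ‖S z‖ = 1 ∧ ⟪S z, S x⟫_ℂ = 0 ∧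
      ‖⟪S y, b⟫_ℂ‖ ≤ ‖q‖ * ‖⟪S x, b⟫_ℂ‖ + √(1 - ‖q‖ ^ 2) * ‖⟪S z, b⟫_ℂ‖ := by
  set t := √(1 - ‖q‖ ^ 2)
  set w := y - conj q • x
  have hw : ‖S w‖ = t := by
    simpa [w] using norm_sub_conj_smul hx hy hyx
  have hdecomp : ⟪S y, b⟫_ℂ = q * ⟪S x, b⟫_ℂ + ⟪S w, b⟫_ℂ := by
    simp only [w, map_sub, map_smul, inner_sub_left, inner_smul_left, RCLike.conj_conj]
    ring
  have hbound : ‖⟪S y, b⟫_ℂ‖ ≤ ‖q‖ * ‖⟪S x, b⟫_ℂ‖ + ‖⟪S w, b⟫_ℂ‖ := by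
    rw [hdecomp, ← norm_mul]
    exact norm_add_le _ _
  by_cases hw0 : S w = 0
  · obtain ⟨z, hz, hzx⟩ := horth
    refine ⟨z, hz, hzx, ?_⟩
    rw [hw0, inner_zero_left, norm_zero, add_zero] at hbound
    exact hbound.trans (le_add_of_nonneg_right (by positivity))
  · have ht : t ≠ 0 := by rwa [← hw, norm_ne_zero_iff]
    have hSw : S w = (t : ℂ) • S ((t⁻¹ : ℂ) • w) := by
      rw [map_smul, smul_smul, mul_inv_cancel₀ (by exact_mod_cast ht), one_smul]
    refine ⟨(t⁻¹ : ℂ) • w, ?_, ?_, ?_⟩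
    · rw [map_smul, norm_smul, norm_inv, Complex.norm_real, hw,
        Real.norm_of_nonneg (by positivity), inv_mul_cancel₀ ht]
    · have hxw : ⟪S x, S w⟫_ℂ = 0 := by simpa [w] using inner_sub_conj_smul_eq_zero hx hyx
      rw [map_smul, inner_smul_left, inner_eq_zero_symm.mp hxw, mul_zero]
    · rwa [hSw, inner_smul_left, norm_mul, Complex.conj_ofReal, Complex.norm_real,
        Real.norm_of_nonneg (by positivity)] at hbound

lemma LinearMap.exists_inner_eq_and_norm_inner_eq {x z : V} {q : ℂ} (hq : ‖q‖ ≤ 1)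
    (hx : ‖S x‖ = 1) (hz : ‖S z‖ = 1) (hzx : ⟪S z, S x⟫_ℂ = 0) (b : E) :
    ∃ y, ‖S y‖ = 1 ∧ ⟪S y, S x⟫_ℂ = q ∧
      ‖⟪S y, b⟫_ℂ‖ = ‖q‖ * ‖⟪S x, b⟫_ℂ‖ + √(1 - ‖q‖ ^ 2) * ‖⟪S z, b⟫_ℂ‖ := by
  obtain ⟨e, he, hnorm⟩ := Complex.exists_norm_eq_and_norm_add_mul_eq (q * ⟪S x, b⟫_ℂ)
    ⟪S z, b⟫_ℂ (Real.sqrt_nonneg (1 - ‖q‖ ^ 2))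
  have hSy : S (conj q • x + conj e • z) = conj q • S x + conj e • S z := by
    rw [map_add, map_smul, map_smul]
  have hinner (c : E) :
      ⟪S (conj q • x + conj e • z), c⟫_ℂ = q * ⟪S x, c⟫_ℂ + e * ⟪S z, c⟫_ℂ := by
    rw [hSy, inner_add_left, inner_smul_left, inner_smul_left, RCLike.conj_conj, RCLike.conj_conj]
  refine ⟨conj q • x + conj e • z, ?_, ?_, ?_⟩
  · have hpyth := norm_add_sq_eq_norm_sq_add_norm_sq_of_inner_eq_zero (conj q • S x)
      (conj e • S z)
      (by rw [inner_smul_left, inner_smul_right, inner_eq_zero_symm.mp hzx, mul_zero, mul_zero])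
    rw [← hSy, norm_smul, norm_smul, RCLike.norm_conj, RCLike.norm_conj, hx, hz, he, mul_one,
      mul_one, Real.mul_self_sqrt (by nlinarith [norm_nonneg q])] at hpyth
    exact (mul_self_inj (norm_nonneg _) zero_le_one).mp (by linarith)
  · rw [hinner, hzx, inner_self_eq_norm_sq_to_K, hx]
    simp
  · rw [hinner, hnorm, norm_mul]

end LinearMap

section SqrtA

variable {A : H →L[ℂ] H}

lemma ContinuousLinearMap.IsPositive.sqrt_mul_sqrt_self (hA : A.IsPositive) :
    CFC.sqrt A * CFC.sqrt A = A :=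
  CFC.sqrt_mul_sqrt_self A ((A.nonneg_iff_isPositive).mpr hA)

lemma sipA_eq_inner_sqrt (hA : A.IsPositive) (x y : H) :
    sipA A x y = ⟪CFC.sqrt A y, CFC.sqrt A x⟫_ℂ := by
  have hS : IsSelfAdjoint (CFC.sqrt A) := (CFC.sqrt_nonneg A).isSelfAdjoint
  conv_lhs => rw [sipA, ← hA.sqrt_mul_sqrt_self]
  rw [mul_apply_eq_comp, ← ContinuousLinearMap.adjoint_inner_left, hS.adjoint_eq]

lemma semiNormA_eq_norm_sqrt (hA : A.IsPositive) (x : H) :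
    semiNormA A x = ‖CFC.sqrt A x‖ := by
  rw [semiNormA, sipA_eq_inner_sqrt hA, ← RCLike.re_to_complex, inner_self_eq_norm_sq,
    Real.sqrt_sq (norm_nonneg _)]

lemma two_le_rank_range_sqrt (hA : A.IsPositive)
    (hrank : 2 ≤ Module.rank ℂ (LinearMap.range A.toLinearMap)) :
    2 ≤ Module.rank ℂ (LinearMap.range (CFC.sqrt A).toLinearMap) := by
  refine hrank.trans (Submodule.rank_mono ?_)
  conv_lhs => rw [← hA.sqrt_mul_sqrt_self]
  exact LinearMap.range_comp_le_range (CFC.sqrt A).toLinearMap (CFC.sqrt A).toLinearMap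

end SqrtA

theorem stmt_8_general (A : H →L[ℂ] H) (hA : A.IsPositive)
    (hrank : 2 ≤ Module.rank ℂ (LinearMap.range A.toLinearMap))
    (T : H →L[ℂ] H)
    (q : ℂ) (hq : ‖q‖ ≤ 1) :
    wqA A q T = sSup {r : ℝ | ∃ x z : H, semiNormA A x = 1 ∧ semiNormA A z = 1 ∧
      sipA A x z = 0 ∧
      r = ‖q‖ * ‖sipA A (T x) x‖ +
        Real.sqrt (1 - ‖q‖ ^ 2) * ‖sipA A (T x) z‖} := by
  set S := (CFC.sqrt A).toLinearMap
  have horth (x : H) : ∃ z, ‖S z‖ = 1 ∧ ⟪S z, S x⟫_ℂ = 0 := by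
    obtain ⟨_, ⟨z, rfl⟩, hz, hzx⟩ := Submodule.exists_mem_norm_eq_one_inner_eq_zero
      (two_le_rank_range_sqrt hA hrank) (LinearMap.mem_range_self S x)
    exact ⟨z, hz, hzx⟩
  simp only [wqA, WqA, sipA_eq_inner_sqrt hA, semiNormA_eq_norm_sqrt hA]
  refine csSup_eq_csSup_of_forall_exists_le ?_ ?_
  · rintro _ ⟨_, ⟨x, y, hx, hy, hyx, rfl⟩, rfl⟩
    obtain ⟨z, hz, hzx, hle⟩ := S.exists_norm_inner_le_of_inner_eq (horth x) hx hy hyx (S (T x))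
    exact ⟨_, ⟨x, z, hx, hz, hzx, rfl⟩, hle⟩
  · rintro _ ⟨x, z, hx, hz, hzx, rfl⟩
    obtain ⟨y, hy, hyx, heq⟩ := S.exists_inner_eq_and_norm_inner_eq hq hx hz hzx (S (T x))
    exact ⟨_, ⟨_, ⟨x, y, hx, hy, hyx, rfl⟩, rfl⟩, heq.ge⟩

theorem stmt_8 (A : H →L[ℂ] H) (hA : A.IsPositive)
    (hrank : 2 ≤ Module.rank ℂ (LinearMap.range A.toLinearMap))
    (T : H →L[ℂ] H) (hT : ABounded A T)
    (q : ℂ) (hq : ‖q‖ ≤ 1) :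
    wqA A q T = sSup {r : ℝ | ∃ x z : H, semiNormA A x = 1 ∧ semiNormA A z = 1 ∧
      sipA A x z = 0 ∧
      r = ‖q‖ * ‖sipA A (T x) x‖ +
        Real.sqrt (1 - ‖q‖ ^ 2) * ‖sipA A (T x) z‖} :=
  stmt_8_general A hA hrank T q hq
end
end

section
/- Let T be a bounded operator admitting an A-adjoint (there exists a bounded W with AW = T*A), let q ∈ D with q ≠ 0, suppose the range of A has dimension at least 2, and let r ≥ 0. If the sequence (‖Tⁿ‖_A)^{1/n} converges to r as n → ∞ (where ‖S‖_A = sup{‖Sx‖_A : x ∈ H, ‖x‖_A ≤ 1}), then the sequence (w_{q,A}(Tⁿ))^{1/n} also converges to r as n → ∞. -/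
noncomputable section

open Filter

variable {H : Type*} [NormedAddCommGroup H] [InnerProductSpace ℂ H] [CompleteSpace H]

open ContinuousLinearMap
open scoped InnerProductSpace InnerProduct Topology

/-! Write `A = R† R` (possible since `A ≥ 0`), so that `‖x‖_A = ‖R x‖` and
`⟨x, y⟩_A = ⟪R y, R x⟫`. If `W` is an `A`-adjoint of `T`, then `‖T x‖_A² ≤ ‖x‖_A ‖W T x‖_A`,
and `W T` is `A`-selfadjoint; for an `A`-selfadjoint `D`, iterating
`‖D x‖_A² ≤ ‖x‖_A ‖D² x‖_A` along the powers `D ^ 2 ^ k` gives `‖D x‖_A ≤ ‖D‖ ‖x‖_A`.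
Hence every power of `T` is `A`-bounded.

For an `A`-bounded `S`, clearly `w_{q,A}(S) ≤ ‖S‖_A`. Conversely, as the range of `A` has
dimension at least two, every `A`-unit vector `x` has an `A`-orthogonal `A`-unit partner, and a
suitable combination `y` of the two gives an admissible pair with
`|⟨S x, y⟩_A| ≥ |q| |⟨S x, x⟩_A|`; polarization then yields `|q| / 2 * ‖S‖_A ≤ w_{q,A}(S)`.
For `S = Tⁿ` the `n`-th roots of both bounds have the same limit, as `(|q| / 2) ^ (1 / n) → 1`.
-/

lemma le_of_forall_pow_two_pow_le_mul_pow {a b C : ℝ} (hb : 0 ≤ b)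
    (h : ∀ k : ℕ, a ^ 2 ^ k ≤ C * b ^ 2 ^ k) : a ≤ b := by
  by_contra! hba
  have ha₀ : 0 < a := hb.trans_lt hba
  have hC : 0 < C := pos_of_mul_pos_left (ha₀.trans_le (by simpa using h 0)) hb
  obtain ⟨k, hk⟩ := exists_pow_lt_of_lt_one (inv_pos.2 hC) ((div_lt_one ha₀).2 hba)
  have : (b / a) ^ 2 ^ k < C⁻¹ :=
    (pow_le_pow_of_le_one (by positivity) ((div_le_one ha₀).2 hba.le)
      k.lt_two_pow_self.le).trans_lt hk
  rw [div_pow, div_lt_iff₀ (by positivity), ← div_eq_inv_mul, lt_div_iff₀ hC, mul_comm] at this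
  exact (h k).not_gt this

lemma tendsto_rpow_one_div_of_const_mul_le {a b : ℕ → ℝ} {κ r : ℝ} (hκ : 0 < κ)
    (ha : ∀ n, 0 ≤ a n) (hlow : ∀ n, κ * a n ≤ b n) (hup : ∀ n, b n ≤ a n)
    (h : Tendsto (fun n : ℕ => a n ^ ((1 : ℝ) / n)) atTop (𝓝 r)) :
    Tendsto (fun n : ℕ => b n ^ ((1 : ℝ) / n)) atTop (𝓝 r) := by
  have hκ_root : Tendsto (fun n : ℕ => κ ^ ((1 : ℝ) / n)) atTop (𝓝 1) := by
    simpa [Function.comp_def] using (Real.continuousAt_const_rpow hκ.ne').tendsto.comp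
      tendsto_one_div_atTop_nhds_zero_nat
  have h_lower : Tendsto (fun n : ℕ => (κ * a n) ^ ((1 : ℝ) / n)) atTop (𝓝 r) := by
    simpa [Real.mul_rpow hκ.le (ha _)] using hκ_root.mul h
  have hκa (n : ℕ) : 0 ≤ κ * a n := mul_nonneg hκ.le (ha n)
  exact tendsto_of_tendsto_of_tendsto_of_le_of_le h_lower h
    (fun n => Real.rpow_le_rpow (hκa n) (hlow n) (by positivity))
    (fun n => Real.rpow_le_rpow ((hκa n).trans (hlow n)) (hup n) (by positivity))

section Geometry

variable {V E : Type*} [NormedAddCommGroup V] [InnerProductSpace ℂ V]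
  [NormedAddCommGroup E] [InnerProductSpace ℂ E]

lemma inner_map_map_polarization (P Q : V →ₗ[ℂ] E) (x y : V) :
    ⟪P y, Q x⟫_ℂ =
      (⟪P (x + y), Q (x + y)⟫_ℂ - ⟪P (x - y), Q (x - y)⟫_ℂ +
        Complex.I * ⟪P (x + Complex.I • y), Q (x + Complex.I • y)⟫_ℂ -
        Complex.I * ⟪P (x - Complex.I • y), Q (x - Complex.I • y)⟫_ℂ) / 4 := by
  simp only [map_add, map_sub, map_smul, inner_add_left, inner_add_right, inner_sub_left,
    inner_sub_right, inner_smul_left, inner_smul_right, Complex.conj_I]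
  ring_nf
  simp only [Complex.I_sq]
  ring

lemma norm_inner_map_map_le (P Q : V →ₗ[ℂ] E) {c : ℝ}
    (hc : ∀ u, ‖⟪P u, Q u⟫_ℂ‖ ≤ c * ‖P u‖ ^ 2) (x y : V) :
    ‖⟪P y, Q x⟫_ℂ‖ ≤ c * (‖P x‖ ^ 2 + ‖P y‖ ^ 2) := by
  have hpar₁ := parallelogram_law_with_norm ℂ (P x) (P y)
  have hpar₂ := parallelogram_law_with_norm ℂ (P x) (Complex.I • P y)
  rw [norm_smul, Complex.norm_I, one_mul] at hpar₂
  have h₁ := hc (x + y)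
  have h₂ := hc (x - y)
  have h₃ := hc (x + Complex.I • y)
  have h₄ := hc (x - Complex.I • y)
  simp only [map_add, map_sub, map_smul] at h₁ h₂ h₃ h₄
  rw [inner_map_map_polarization, norm_div, Complex.norm_ofNat]
  grw [norm_sub_le, norm_add_le, norm_sub_le, norm_mul, norm_mul, Complex.norm_I]
  simp only [map_add, map_sub, map_smul]
  linear_combination (h₁ + h₂ + h₃ + h₄ + c * hpar₁ + c * hpar₂) / 4

lemma norm_le_norm_add_or_norm_le_norm_sub (a b : E) : ‖a‖ ≤ ‖a + b‖ ∨ ‖a‖ ≤ ‖a - b‖ := by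
  by_contra! h
  have h2 : (a + b) + (a - b) = (2 : ℝ) • a := by rw [two_smul]; abel
  have := norm_add_le (a + b) (a - b)
  rw [h2, norm_smul, Real.norm_two] at this
  linarith

lemma Submodule.exists_norm_eq_one_inner_eq_zero (K : Submodule ℂ E)
    (hK : 2 ≤ Module.rank ℂ K) {v : E} (hv : v ∈ K) (hv1 : ‖v‖ = 1) :
    ∃ w ∈ K, ‖w‖ = 1 ∧ ⟪w, v⟫_ℂ = 0 := by
  obtain ⟨u, hu, hu_notMem⟩ : ∃ u ∈ K, u ∉ ℂ ∙ v := by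
    by_contra! h
    have := hK.trans ((Submodule.rank_mono h).trans (rank_span_le {v}))
    norm_num at this
  set w := u - ⟪v, u⟫_ℂ • v
  have hw : w ≠ 0 := fun h =>
    hu_notMem (sub_eq_zero.1 h ▸ Submodule.smul_mem _ _ (Submodule.mem_span_singleton_self v))
  refine ⟨(‖w‖⁻¹ : ℂ) • w, K.smul_mem _ (K.sub_mem hu (K.smul_mem _ hv)),
    norm_smul_inv_norm hw, ?_⟩
  rw [inner_smul_left, inner_sub_left, inner_smul_left, inner_self_eq_norm_sq_to_K, hv1,
    ← inner_conj_symm v u]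
  simp

lemma exists_norm_eq_one_inner_eq_and_le {v w : E} (hv : ‖v‖ = 1) (hw : ‖w‖ = 1)
    (hvw : ⟪w, v⟫_ℂ = 0) {q : ℂ} (hq : ‖q‖ ≤ 1) (s : E) :
    ∃ a b : ℂ, ‖a • v + b • w‖ = 1 ∧ ⟪a • v + b • w, v⟫_ℂ = q ∧
      ‖q‖ * ‖⟪v, s⟫_ℂ‖ ≤ ‖⟪a • v + b • w, s⟫_ℂ‖ := by
  have key : ∀ b : ℝ, b ^ 2 = 1 - ‖q‖ ^ 2 →
      ‖(starRingEnd ℂ q) • v + (b : ℂ) • w‖ = 1 ∧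
      ⟪(starRingEnd ℂ q) • v + (b : ℂ) • w, v⟫_ℂ = q ∧
      ⟪(starRingEnd ℂ q) • v + (b : ℂ) • w, s⟫_ℂ = q * ⟪v, s⟫_ℂ + b * ⟪w, s⟫_ℂ := by
    intro b hb
    refine ⟨?_, by simp [hvw, inner_self_eq_norm_sq_to_K, hv],
      by simp [mul_comm]⟩
    have horth : ⟪(starRingEnd ℂ q) • v, (b : ℂ) • w⟫_ℂ = 0 := by
      rw [inner_smul_left, inner_smul_right, ← inner_conj_symm, hvw]
      simp
    have := norm_add_sq_eq_norm_sq_add_norm_sq_of_inner_eq_zero _ _ horth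
    rw [norm_smul, norm_smul, hv, hw, Complex.norm_conj, Complex.norm_real, Real.norm_eq_abs,
      mul_one, mul_one, abs_mul_abs_self, ← sq, ← sq, ← sq, hb, add_sub_cancel] at this
    exact (pow_eq_one_iff_of_nonneg (norm_nonneg _) two_ne_zero).1 this
  set c : ℝ := √(1 - ‖q‖ ^ 2)
  have hc : c ^ 2 = 1 - ‖q‖ ^ 2 := Real.sq_sqrt (by nlinarith [norm_nonneg q])
  rcases norm_le_norm_add_or_norm_le_norm_sub (q * ⟪v, s⟫_ℂ) (c * ⟪w, s⟫_ℂ) with h | h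
  · obtain ⟨h₁, h₂, h₃⟩ := key c hc
    exact ⟨_, _, h₁, h₂, by rwa [h₃, ← norm_mul]⟩
  · obtain ⟨h₁, h₂, h₃⟩ := key (-c) (by rwa [neg_sq])
    exact ⟨_, _, h₁, h₂, by rwa [h₃, ← norm_mul, Complex.ofReal_neg, neg_mul, ← sub_eq_add_neg]⟩

end Geometry

omit [CompleteSpace H] in
lemma opNormA_nonneg (A S : H →L[ℂ] H) : 0 ≤ opNormA A S :=
  Real.sSup_nonneg fun _ ⟨_, _, h⟩ => h ▸ Real.sqrt_nonneg _

omit [CompleteSpace H] in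
lemma wqA_nonneg (A : H →L[ℂ] H) (q : ℂ) (S : H →L[ℂ] H) : 0 ≤ wqA A q S :=
  Real.sSup_nonneg fun _ ⟨_, _, h⟩ => h ▸ norm_nonneg _

omit [CompleteSpace H] in
lemma ABounded.le_opNormA {A S : H →L[ℂ] H} (hS : ABounded A S) {x : H} (hx : semiNormA A x ≤ 1) :
    semiNormA A (S x) ≤ opNormA A S := by
  obtain ⟨c, hc₀, hc⟩ := hS
  refine le_csSup ⟨c, ?_⟩ ⟨x, hx, rfl⟩
  rintro _ ⟨x, hx, rfl⟩
  exact (hc x).trans (mul_le_of_le_one_right hc₀.le hx)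

def IsAAdjoint (A T W : H →L[ℂ] H) : Prop := A ∘L W = T† ∘L A

namespace IsAAdjoint

variable {A T W : H →L[ℂ] H}

lemma mul {T' W' : H →L[ℂ] H} (h : IsAAdjoint A T W) (h' : IsAAdjoint A T' W') :
    IsAAdjoint A (T' * T) (W * W') := by
  rw [IsAAdjoint, mul_def, mul_def, ← comp_assoc, h, comp_assoc, h', adjoint_comp, comp_assoc]

lemma pow (h : IsAAdjoint A T W) (n : ℕ) : IsAAdjoint A (T ^ n) (W ^ n) := by
  induction n with
  | zero => simp [IsAAdjoint, one_def, adjoint_id]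
  | succ n ih => rw [pow_succ, pow_succ']; exact h.mul ih

lemma symm (hA : IsSelfAdjoint A) (h : IsAAdjoint A T W) : IsAAdjoint A W T := by
  have := congrArg adjoint h
  rw [adjoint_comp, adjoint_comp, adjoint_adjoint, ← star_eq_adjoint A, hA.star_eq] at this
  exact this.symm

end IsAAdjoint

section AdjointCompSelf

variable {E : Type*} [NormedAddCommGroup E] [InnerProductSpace ℂ E] [CompleteSpace E]
  (R : H →L[ℂ] E)

lemma sipA_adjoint_comp_self (x y : H) : sipA (R† ∘L R) x y = ⟪R y, R x⟫_ℂ := by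
  rw [sipA, comp_apply, adjoint_inner_right]

lemma semiNormA_adjoint_comp_self (x : H) : semiNormA (R† ∘L R) x = ‖R x‖ := by
  rw [semiNormA, sipA_adjoint_comp_self, ← RCLike.re_to_complex, inner_self_eq_norm_sq,
    Real.sqrt_sq (norm_nonneg _)]

variable {R} {T W D : H →L[ℂ] H}

lemma IsAAdjoint.sq_norm_le (h : IsAAdjoint (R† ∘L R) T W) (x : H) :
    ‖R (T x)‖ ^ 2 ≤ ‖R x‖ * ‖R (W (T x))‖ := by
  have hTW : ⟪R (T x), R (T x)⟫_ℂ = ⟪R x, R (W (T x))⟫_ℂ :=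
    calc ⟪R (T x), R (T x)⟫_ℂ = ⟪x, (T† ∘L (R† ∘L R)) (T x)⟫_ℂ := by
          rw [comp_apply, adjoint_inner_right, comp_apply, adjoint_inner_right]
      _ = ⟪R x, R (W (T x))⟫_ℂ := by rw [← h, comp_apply, comp_apply, adjoint_inner_right]
  rw [← inner_self_eq_norm_sq (𝕜 := ℂ), RCLike.re_to_complex, hTW]
  exact (Complex.re_le_norm _).trans (norm_inner_le_norm _ _)

lemma IsAAdjoint.pow_two_pow_norm_le (hD : IsAAdjoint (R† ∘L R) D D) {x : H} (hx : ‖R x‖ = 1)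
    (k : ℕ) : ‖R (D x)‖ ^ 2 ^ k ≤ ‖R ((D ^ 2 ^ k) x)‖ := by
  induction k with
  | zero => simp
  | succ k ih =>
    have step := (hD.pow (2 ^ k)).sq_norm_le x
    rw [hx, one_mul, ← mul_apply_eq_comp, ← pow_add, ← two_mul, ← pow_succ'] at step
    calc ‖R (D x)‖ ^ 2 ^ (k + 1) = (‖R (D x)‖ ^ 2 ^ k) ^ 2 := by rw [pow_succ, pow_mul]
      _ ≤ ‖R ((D ^ 2 ^ k) x)‖ ^ 2 := by gcongr
      _ ≤ ‖R ((D ^ 2 ^ (k + 1)) x)‖ := step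

lemma IsAAdjoint.norm_apply_le_of_self (hD : IsAAdjoint (R† ∘L R) D D) (x : H) :
    ‖R (D x)‖ ≤ ‖D‖ * ‖R x‖ := by
  have h_unit : ∀ x, ‖R x‖ = 1 → ‖R (D x)‖ ≤ ‖D‖ := fun x hx =>
    le_of_forall_pow_two_pow_le_mul_pow (norm_nonneg D) (C := ‖R‖ * ‖x‖) fun k =>
      calc ‖R (D x)‖ ^ 2 ^ k ≤ ‖R ((D ^ 2 ^ k) x)‖ := hD.pow_two_pow_norm_le hx k
        _ ≤ ‖R‖ * (‖D ^ 2 ^ k‖ * ‖x‖) := R.le_opNorm_of_le ((D ^ 2 ^ k).le_opNorm x)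
        _ ≤ ‖R‖ * ‖x‖ * ‖D‖ ^ 2 ^ k := by
          rw [mul_comm ‖D ^ 2 ^ k‖, ← mul_assoc]
          gcongr
          exact norm_pow_le' D (by positivity)
  rcases (norm_nonneg (R x)).eq_or_lt with h0 | hpos
  · have := hD.sq_norm_le x
    rw [← h0, zero_mul] at this
    rw [← h0, mul_zero]
    simpa using this
  · have := h_unit ((‖R x‖⁻¹ : ℂ) • x)
      (by rw [map_smul]; exact norm_smul_inv_norm (norm_pos_iff.1 hpos))
    rwa [map_smul, map_smul, norm_smul, norm_inv, Complex.norm_real, norm_norm,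
      inv_mul_le_iff₀ hpos, mul_comm] at this

lemma IsAAdjoint.aBounded (h : IsAAdjoint (R† ∘L R) T W) : ABounded (R† ∘L R) T := by
  have hWT := h.mul (h.symm (isPositive_adjoint_comp_self R).isSelfAdjoint)
  -- `√‖W * T‖` already works; `ABounded` asks for a positive constant.
  refine ⟨√‖W * T‖ + 1, by positivity, fun x => ?_⟩
  rw [semiNormA_adjoint_comp_self, semiNormA_adjoint_comp_self]
  refine le_of_pow_le_pow_left₀ two_ne_zero (by positivity) ?_
  calc ‖R (T x)‖ ^ 2 ≤ ‖R x‖ * ‖R ((W * T) x)‖ := h.sq_norm_le x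
    _ ≤ ‖R x‖ * (‖W * T‖ * ‖R x‖) := by gcongr; exact hWT.norm_apply_le_of_self x
    _ ≤ ((√‖W * T‖ + 1) * ‖R x‖) ^ 2 := by
      rw [mul_pow, add_sq, Real.sq_sqrt (norm_nonneg _)]
      nlinarith [norm_nonneg (R x), Real.sqrt_nonneg ‖W * T‖]

variable {S : H →L[ℂ] H} {q : ℂ}

lemma norm_inner_le_wqA (hS : ABounded (R† ∘L R) S) {x y : H} (hx : ‖R x‖ = 1) (hy : ‖R y‖ = 1)
    (hxy : ⟪R y, R x⟫_ℂ = q) : ‖⟪R y, R (S x)⟫_ℂ‖ ≤ wqA (R† ∘L R) q S := by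
  obtain ⟨c, -, hc⟩ := hS
  refine le_csSup ⟨c, ?_⟩ ⟨_, ⟨x, y, ?_, ?_, ?_, rfl⟩, by rw [sipA_adjoint_comp_self]⟩
  · rintro _ ⟨_, ⟨x, y, hx, hy, -, rfl⟩, rfl⟩
    simp only [semiNormA_adjoint_comp_self, sipA_adjoint_comp_self] at hx hy hc ⊢
    calc ‖⟪R y, R (S x)⟫_ℂ‖ ≤ ‖R y‖ * ‖R (S x)‖ := norm_inner_le_norm _ _
      _ ≤ c := by simpa [hx, hy] using hc x
  all_goals simpa [semiNormA_adjoint_comp_self, sipA_adjoint_comp_self]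

lemma wqA_le_opNormA (hS : ABounded (R† ∘L R) S) :
    wqA (R† ∘L R) q S ≤ opNormA (R† ∘L R) S := by
  refine Real.sSup_le ?_ (opNormA_nonneg _ _)
  rintro _ ⟨_, ⟨x, y, hx, hy, -, rfl⟩, rfl⟩
  rw [semiNormA_adjoint_comp_self] at hy
  calc ‖sipA (R† ∘L R) (S x) y‖ = ‖⟪R y, R (S x)⟫_ℂ‖ := by rw [sipA_adjoint_comp_self]
    _ ≤ ‖R y‖ * ‖R (S x)‖ := norm_inner_le_norm _ _
    _ = semiNormA (R† ∘L R) (S x) := by rw [hy, one_mul, semiNormA_adjoint_comp_self]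
    _ ≤ opNormA (R† ∘L R) S := hS.le_opNormA hx.le

lemma mul_norm_inner_le_wqA_of_norm_eq_one (hS : ABounded (R† ∘L R) S)
    (hR : 2 ≤ Module.rank ℂ (LinearMap.range (R : H →ₗ[ℂ] E))) (hq : ‖q‖ ≤ 1) {x : H}
    (hx : ‖R x‖ = 1) : ‖q‖ * ‖⟪R x, R (S x)⟫_ℂ‖ ≤ wqA (R† ∘L R) q S := by
  obtain ⟨_, ⟨z, rfl⟩, hz, hzx⟩ :=
    (LinearMap.range (R : H →ₗ[ℂ] E)).exists_norm_eq_one_inner_eq_zero hR ⟨x, rfl⟩ hx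
  obtain ⟨a, b, hy, hyx, hle⟩ := exists_norm_eq_one_inner_eq_and_le hx hz hzx hq (R (S x))
  simp only [ContinuousLinearMap.coe_coe] at hz hzx hy hyx hle
  have hRy : R (a • x + b • z) = a • R x + b • R z := by simp
  refine hle.trans ?_
  rw [← hRy] at hy hyx ⊢
  exact norm_inner_le_wqA hS hx hy hyx

lemma mul_norm_inner_le_wqA_mul_sq (hS : ABounded (R† ∘L R) S)
    (hR : 2 ≤ Module.rank ℂ (LinearMap.range (R : H →ₗ[ℂ] E))) (hq : ‖q‖ ≤ 1) (x : H) :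
    ‖q‖ * ‖⟪R x, R (S x)⟫_ℂ‖ ≤ wqA (R† ∘L R) q S * ‖R x‖ ^ 2 := by
  rcases eq_or_ne (R x) 0 with h0 | h0
  · simp [h0]
  · have := mul_norm_inner_le_wqA_of_norm_eq_one hS hR hq (x := (‖R x‖⁻¹ : ℂ) • x)
      (by rw [map_smul]; exact norm_smul_inv_norm h0)
    rw [map_smul, map_smul, map_smul, inner_smul_left, inner_smul_right, norm_mul, norm_mul,
      Complex.norm_conj, norm_inv, Complex.norm_real, norm_norm] at this
    calc ‖q‖ * ‖⟪R x, R (S x)⟫_ℂ‖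
        = ‖q‖ * (‖R x‖⁻¹ * (‖R x‖⁻¹ * ‖⟪R x, R (S x)⟫_ℂ‖)) * ‖R x‖ ^ 2 := by
          field_simp [norm_ne_zero_iff.2 h0]
      _ ≤ wqA (R† ∘L R) q S * ‖R x‖ ^ 2 := by gcongr

lemma opNormA_le_two_mul {c : ℝ} (hc : 0 ≤ c)
    (hS : ∀ u, ‖⟪R u, R (S u)⟫_ℂ‖ ≤ c * ‖R u‖ ^ 2) : opNormA (R† ∘L R) S ≤ 2 * c := by
  refine Real.sSup_le ?_ (by positivity)
  rintro _ ⟨x, hx, rfl⟩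
  rw [Set.mem_ofPred_eq, semiNormA_adjoint_comp_self] at hx
  dsimp only
  rw [semiNormA_adjoint_comp_self]
  rcases eq_or_ne (R (S x)) 0 with h0 | h0
  · rw [h0, norm_zero]; positivity
  set y := (‖R (S x)‖⁻¹ : ℂ) • S x
  have hy : ‖R y‖ = 1 := by rw [map_smul]; exact norm_smul_inv_norm h0
  have hyx : ‖⟪R y, R (S x)⟫_ℂ‖ = ‖R (S x)‖ := by
    rw [map_smul, inner_smul_left, inner_self_eq_norm_sq_to_K]
    simp [sq, norm_ne_zero_iff.2 h0]
  calc ‖R (S x)‖ = ‖⟪R y, R (S x)⟫_ℂ‖ := hyx.symm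
    _ ≤ c * (‖R x‖ ^ 2 + ‖R y‖ ^ 2) := norm_inner_map_map_le (R : H →ₗ[ℂ] E) (R ∘L S) hS x y
    _ ≤ c * (1 + 1) := by rw [hy, one_pow]; gcongr; exact pow_le_one₀ (norm_nonneg _) hx
    _ = 2 * c := by ring

lemma norm_div_two_mul_opNormA_le_wqA (hS : ABounded (R† ∘L R) S)
    (hR : 2 ≤ Module.rank ℂ (LinearMap.range (R : H →ₗ[ℂ] E))) (hq : ‖q‖ ≤ 1) (hq₀ : q ≠ 0) :
    ‖q‖ / 2 * opNormA (R† ∘L R) S ≤ wqA (R† ∘L R) q S := by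
  have hq_pos : 0 < ‖q‖ := norm_pos_iff.2 hq₀
  set c := wqA (R† ∘L R) q S / ‖q‖
  have hop : opNormA (R† ∘L R) S ≤ 2 * c :=
    opNormA_le_two_mul (div_nonneg (wqA_nonneg _ _ _) hq_pos.le) fun u => by
      rw [div_mul_eq_mul_div, le_div_iff₀ hq_pos, mul_comm]
      exact mul_norm_inner_le_wqA_mul_sq hS hR hq u
  calc ‖q‖ / 2 * opNormA (R† ∘L R) S ≤ ‖q‖ / 2 * (2 * c) := by gcongr
    _ = ‖q‖ * c := by ring
    _ = wqA (R† ∘L R) q S := mul_div_cancel₀ _ hq_pos.ne'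

end AdjointCompSelf

theorem stmt_12_general (A : H →L[ℂ] H) (hA : A.IsPositive)
    (hrank : 2 ≤ Module.rank ℂ (LinearMap.range A.toLinearMap))
    (T : H →L[ℂ] H)
    (hadj : ∃ W : H →L[ℂ] H, A.comp W = (ContinuousLinearMap.adjoint T).comp A)
    (q : ℂ) (hq : ‖q‖ ≤ 1) (hq0 : q ≠ 0)
    (r : ℝ)
    (hlim : Tendsto (fun n : ℕ => opNormA A (T ^ n) ^ ((1 : ℝ) / n)) atTop (nhds r)) :
    Tendsto (fun n : ℕ => wqA A q (T ^ n) ^ ((1 : ℝ) / n)) atTop (nhds r) := by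
  obtain ⟨R, rfl⟩ : ∃ R : H →L[ℂ] H, A = R† ∘L R :=
    CStarAlgebra.nonneg_iff_eq_star_mul_self.1 ((nonneg_iff_isPositive A).2 hA)
  obtain ⟨W, hW⟩ := hadj
  have hR : 2 ≤ Module.rank ℂ (LinearMap.range (R : H →ₗ[ℂ] H)) :=
    hrank.trans (LinearMap.rank_comp_le_right _ _)
  have hTn (n : ℕ) : ABounded (R† ∘L R) (T ^ n) := (IsAAdjoint.pow hW n).aBounded
  exact tendsto_rpow_one_div_of_const_mul_le (half_pos (norm_pos_iff.2 hq0))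
    (fun _ => opNormA_nonneg _ _) (fun n => norm_div_two_mul_opNormA_le_wqA (hTn n) hR hq hq0)
    (fun n => wqA_le_opNormA (hTn n)) hlim

theorem stmt_12 (A : H →L[ℂ] H) (hA : A.IsPositive)
    (hrank : 2 ≤ Module.rank ℂ (LinearMap.range A.toLinearMap))
    (T : H →L[ℂ] H)
    (hadj : ∃ W : H →L[ℂ] H, A.comp W = (ContinuousLinearMap.adjoint T).comp A)
    (q : ℂ) (hq : ‖q‖ ≤ 1) (hq0 : q ≠ 0)
    (r : ℝ) (hr : 0 ≤ r)
    (hlim : Tendsto (fun n : ℕ => opNormA A (T ^ n) ^ ((1 : ℝ) / n)) atTop (nhds r)) :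
    Tendsto (fun n : ℕ => wqA A q (T ^ n) ^ ((1 : ℝ) / n)) atTop (nhds r) :=
  stmt_12_general A hA hrank T hadj q hq hq0 r hlim
end
end
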